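/- arXiv:2111.00498 — 4 statements merged into one kernel-verified Lean document; each statement's English description precedes it below -/
import Mathlib

section
/- Let H = ⟨3, ℓ⟩ where ℓ = 3n+1 with n ≥ 3 odd, and set q = (n-1)/2. If α is a positive integer with ℓ/2 ≤ α < ℓ, α ≢ 0 (mod 3), α ≡ 2 (mod 3), and ℓ ∈ ⟨3, α⟩, then α = 3q+2. -/
/- Since `ℓ ≤ 2α < 3α`, a representation `ℓ = 3x + αy` has `y ≤ 2`; reducing mod 3 with
`ℓ ≡ 1` and `α ≡ 2` forces `y = 2`, hence `x = 0` and `ℓ = 2α`. -/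

theorem eq_two_mul_of_eq_three_mul_add_mul {ℓ α x y : ℕ} (hℓ : ℓ % 3 = 1) (hα : α % 3 = 2)
    (hle : ℓ ≤ 2 * α) (h : ℓ = 3 * x + α * y) : ℓ = 2 * α := by
  have hy : y < 3 := by
    by_contra! hy
    have : α * 3 ≤ α * y := Nat.mul_le_mul_left α hy
    omega
  interval_cases y <;> omega

theorem stmt_0_general (n q ℓ α : ℕ) (hodd : Odd n)
    (hℓ : ℓ = 3 * n + 1) (hq : q = (n - 1) / 2)
    (hhalf : ℓ ≤ 2 * α)
    (hmod2 : α % 3 = 2)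
    (hmem : ∃ x y : ℕ, ℓ = 3 * x + α * y) :
    α = 3 * q + 2 := by
  obtain ⟨x, y, h⟩ := hmem
  have hℓα : ℓ = 2 * α := eq_two_mul_of_eq_three_mul_add_mul (by omega) hmod2 hhalf h
  obtain ⟨k, rfl⟩ := hodd
  omega

/-- For `H = ⟨3, ℓ⟩` with `ℓ = 3n+1`, `n ≥ 3` odd, `q = (n-1)/2`:
if `0 < α`, `ℓ/2 ≤ α < ℓ`, `α ≢ 0 (mod 3)`, `α ≡ 2 (mod 3)`, and `ℓ ∈ ⟨3, α⟩`,
then `α = 3q+2`. -/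
theorem stmt_0 (n q ℓ α : ℕ) (hn : 3 ≤ n) (hodd : Odd n)
    (hℓ : ℓ = 3 * n + 1) (hq : q = (n - 1) / 2)
    (hαpos : 0 < α) (hhalf : ℓ ≤ 2 * α) (hlt : α < ℓ)
    (hmod0 : α % 3 ≠ 0) (hmod2 : α % 3 = 2)
    (hmem : ∃ x y : ℕ, ℓ = 3 * x + α * y) :
    α = 3 * q + 2 :=
  stmt_0_general n q ℓ α hodd hℓ hq hhalf hmod2 hmem
end

section
/- Let ℓ = 3n+2 with n ≥ 2 even and q = n/2. If α is an integer with ℓ/2 ≤ α < ℓ, α ≡ 1 (mod 3), and ℓ ∈ ⟨3, α⟩, then α = 3q+1. -/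
/-!
Write `ℓ = 3x + αy`. Reducing mod 3 gives `y ≡ 2`, while `3α > 2α ≥ ℓ` forces `y < 3`;
so `y = 2`, and `2α ≤ ℓ ≤ 2α` leaves `ℓ = 2α`, i.e. `α = (3n+2)/2 = 3q+1`.
-/

lemma coeff_eq_two_of_le_two_mul {ℓ α x y : ℕ} (hα : α % 3 = 1) (hℓ : ℓ % 3 = 2)
    (hle : ℓ ≤ 2 * α) (h : ℓ = 3 * x + α * y) : y = 2 := by
  have hy_mod : y % 3 = 2 := by
    have : α * y % 3 = y % 3 := by rw [Nat.mul_mod, hα, one_mul, Nat.mod_mod]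
    omega
  have hy_lt : y < 3 := by
    by_contra! hy
    have : α * 3 ≤ α * y := Nat.mul_le_mul_left α hy
    omega
  omega

lemma eq_two_mul_of_mem_of_le_two_mul {ℓ α : ℕ} (hα : α % 3 = 1) (hℓ : ℓ % 3 = 2)
    (hle : ℓ ≤ 2 * α) (hmem : ∃ x y : ℕ, ℓ = 3 * x + α * y) : ℓ = 2 * α := by
  obtain ⟨x, y, h⟩ := hmem
  obtain rfl := coeff_eq_two_of_le_two_mul hα hℓ hle h
  omega

theorem stmt_3_general (n q ℓ α : ℕ)
    (hℓ : ℓ = 3 * n + 2) (hq : q = n / 2)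
    (hhalf : ℓ ≤ 2 * α) (hmod1 : α % 3 = 1)
    (hmem : ∃ x y : ℕ, ℓ = 3 * x + α * y) :
    α = 3 * q + 1 := by
  have hℓ_mod : ℓ % 3 = 2 := by omega
  have := eq_two_mul_of_mem_of_le_two_mul hmod1 hℓ_mod hhalf hmem
  omega

/-- For `ℓ = 3n+2` with `n ≥ 2` even, `q = n/2`: if `ℓ/2 ≤ α < ℓ`,
`α ≡ 1 (mod 3)`, and `ℓ ∈ ⟨3, α⟩`, then `α = 3q+1`. -/
theorem stmt_3 (n q ℓ α : ℕ) (hn : 2 ≤ n) (heven : Even n)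
    (hℓ : ℓ = 3 * n + 2) (hq : q = n / 2)
    (hhalf : ℓ ≤ 2 * α) (hlt : α < ℓ) (hmod1 : α % 3 = 1)
    (hmem : ∃ x y : ℕ, ℓ = 3 * x + α * y) :
    α = 3 * q + 1 :=
  stmt_3_general n q ℓ α hℓ hq hhalf hmod1 hmem
end

section
/- Let B = k[Y,Z]/(Y^{β+β'}, Y^{β'}Z^{γ}, Z^{γ+γ'}) with β, β', γ, γ' ≥ 1, and let y, z denote the images of Y, Z. Then the kernel of the map B² → B given by (u,v) ↦ yu + zv is generated by the columns of the matrix M₁ = [[y^{β+β'-1}, y^{β'-1}z^{γ}, 0, z], [0, 0, z^{γ+γ'-1}, -y]]. -/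
set_option synthInstance.maxHeartbeats 1000000
set_option maxHeartbeats 1000000

open MvPolynomial

/-!
Since `Y` is prime in `k[Y,Z]` and does not divide `Z`, the only relations between `Y` and `Z`
are the multiples of the Koszul relation `(Z, -Y)`. Each generator of
`J = (Y^{β+β'}, Y^{β'}Z^γ, Z^{γ+γ'})` is a multiple of `Y` or of `Z`, so a relation
`Y u + Z v ∈ J` becomes a genuine relation after subtracting the corresponding multiples of
`(Y^{β+β'-1}, 0)`, `(Y^{β'-1}Z^γ, 0)` and `(0, Z^{γ+γ'-1})`.
-/

section KoszulRelation

variable {R : Type*} [CommRing R] {x y : R}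

theorem exists_eq_mul_of_mul_add_mul_eq_zero [IsDomain R] (hx : Prime x) (hxy : ¬ x ∣ y)
    {u v : R} (h : x * u + y * v = 0) : ∃ w, u = y * w ∧ v = -(x * w) := by
  have hdvd : x ∣ y * v := ⟨-u, by linear_combination h⟩
  obtain ⟨w, rfl⟩ := (hx.dvd_or_dvd hdvd).resolve_left hxy
  exact ⟨-w, mul_left_cancel₀ hx.ne_zero (by linear_combination h), by ring⟩

variable {f g h : R} {J : Ideal R}

theorem mem_span_of_mul_add_mul_eq_zero [IsDomain R] (hx : Prime x) (hxy : ¬ x ∣ y)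
    (hJ : J = Ideal.span {x * f, x * g, y * h}) {p : (R ⧸ J) × (R ⧸ J)}
    (hp : Ideal.Quotient.mk J x * p.1 + Ideal.Quotient.mk J y * p.2 = 0) :
    p ∈ Submodule.span (R ⧸ J)
      {(Ideal.Quotient.mk J f, 0), (Ideal.Quotient.mk J g, 0), (0, Ideal.Quotient.mk J h),
        (Ideal.Quotient.mk J y, -Ideal.Quotient.mk J x)} := by
  set π := Ideal.Quotient.mk J
  obtain ⟨u, v⟩ := p
  obtain ⟨U, rfl⟩ := Ideal.Quotient.mk_surjective u
  obtain ⟨V, rfl⟩ := Ideal.Quotient.mk_surjective v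
  have hmem : x * U + y * V ∈ J := by
    rwa [← Ideal.Quotient.eq_zero_iff_mem, map_add, map_mul, map_mul]
  rw [hJ, Ideal.mem_span_insert] at hmem
  obtain ⟨a, r, hr, hUV⟩ := hmem
  obtain ⟨b, c, rfl⟩ := Ideal.mem_span_pair.mp hr
  obtain ⟨w, hU, hV⟩ := exists_eq_mul_of_mul_add_mul_eq_zero hx hxy
    (u := U - a * f - b * g) (v := V - c * h) (by linear_combination hUV)
  have hp : ((π U, π V) : (R ⧸ J) × (R ⧸ J)) =
      π a • (π f, 0) + π b • (π g, 0) + π c • (0, π h) + π w • (π y, -π x) := by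
    rw [sub_sub, sub_eq_iff_eq_add] at hU
    rw [sub_eq_iff_eq_add] at hV
    ext <;> simp only [hU, hV, map_add, map_mul, map_neg, Prod.fst_add, Prod.snd_add,
      Prod.smul_fst, Prod.smul_snd, smul_eq_mul, mul_zero, add_zero] <;> ring
  rw [hp]
  refine add_mem (add_mem (add_mem ?_ ?_) ?_) ?_ <;>
    exact Submodule.smul_mem _ _ (Submodule.subset_span (by simp))

theorem mul_add_mul_eq_zero_of_mem_span (hJ : J = Ideal.span {x * f, x * g, y * h})
    {p : (R ⧸ J) × (R ⧸ J)}
    (hp : p ∈ Submodule.span (R ⧸ J)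
      {(Ideal.Quotient.mk J f, 0), (Ideal.Quotient.mk J g, 0), (0, Ideal.Quotient.mk J h),
        (Ideal.Quotient.mk J y, -Ideal.Quotient.mk J x)}) :
    Ideal.Quotient.mk J x * p.1 + Ideal.Quotient.mk J y * p.2 = 0 := by
  set π := Ideal.Quotient.mk J
  let φ := (LinearMap.mulLeft (R ⧸ J) (π x)).coprod (LinearMap.mulLeft (R ⧸ J) (π y))
  have hπ : ∀ r ∈ ({x * f, x * g, y * h} : Set R), π r = 0 := fun r hr ↦
    Ideal.Quotient.eq_zero_iff_mem.mpr (hJ ▸ Ideal.subset_span hr)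
  suffices Submodule.span (R ⧸ J) _ ≤ LinearMap.ker φ from this hp
  rw [Submodule.span_le]
  rintro q (rfl | rfl | rfl | rfl) <;> simp only [SetLike.mem_coe, LinearMap.mem_ker, φ,
    LinearMap.coprod_apply, LinearMap.mulLeft_apply, mul_zero, add_zero, zero_add, ← map_mul]
  iterate 3 exact hπ _ (by simp)
  rw [map_mul]; ring

end KoszulRelation

theorem stmt_15_general (k : Type*) [Field k] (β β' γ γ' : ℕ)
    (hβ' : 1 ≤ β') (hγ' : 1 ≤ γ')
    (J : Ideal (MvPolynomial (Fin 2) k))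
    (hJ : J = Ideal.span {(X 0 : MvPolynomial (Fin 2) k) ^ (β + β'),
      (X 0) ^ β' * (X 1) ^ γ, (X 1) ^ (γ + γ')})
    (y z : MvPolynomial (Fin 2) k ⧸ J)
    (hy : y = Ideal.Quotient.mk J (X 0)) (hz : z = Ideal.Quotient.mk J (X 1)) :
    ∀ p : (MvPolynomial (Fin 2) k ⧸ J) × (MvPolynomial (Fin 2) k ⧸ J),
      y * p.1 + z * p.2 = 0 ↔
        p ∈ Submodule.span (MvPolynomial (Fin 2) k ⧸ J)
          ({(y ^ (β + β' - 1), 0), (y ^ (β' - 1) * z ^ γ, 0),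
            (0, z ^ (γ + γ' - 1)), (z, -y)} :
            Set ((MvPolynomial (Fin 2) k ⧸ J) × (MvPolynomial (Fin 2) k ⧸ J))) := by
  have hJ' : J = Ideal.span {X 0 * X 0 ^ (β + β' - 1), X 0 * (X 0 ^ (β' - 1) * X 1 ^ γ),
      X 1 * X 1 ^ (γ + γ' - 1)} := by
    rw [hJ, ← mul_assoc, mul_pow_sub_one (by omega), mul_pow_sub_one (by omega),
      mul_pow_sub_one (by omega)]
  have hX : ¬ (X 0 : MvPolynomial (Fin 2) k) ∣ X 1 := by rw [X_dvd_X]; decide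
  subst hy hz
  intro p
  simp only [← map_pow, ← map_mul]
  exact ⟨mem_span_of_mul_add_mul_eq_zero X_prime hX hJ', mul_add_mul_eq_zero_of_mem_span hJ'⟩

/-- Let `B = k[Y,Z]/(Y^{β+β'}, Y^{β'}Z^γ, Z^{γ+γ'})` with
`β, β', γ, γ' ≥ 1` and let `y, z` be the images of `Y, Z`.  The kernel of
`B² → B`, `(u,v) ↦ yu + zv`, is generated by the columns of
`M₁ = [[y^{β+β'-1}, y^{β'-1}z^γ, 0, z], [0, 0, z^{γ+γ'-1}, -y]]`. -/
theorem stmt_15 (k : Type*) [Field k] (β β' γ γ' : ℕ)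
    (hβ : 1 ≤ β) (hβ' : 1 ≤ β') (hγ : 1 ≤ γ) (hγ' : 1 ≤ γ')
    (J : Ideal (MvPolynomial (Fin 2) k))
    (hJ : J = Ideal.span {(X 0 : MvPolynomial (Fin 2) k) ^ (β + β'),
      (X 0) ^ β' * (X 1) ^ γ, (X 1) ^ (γ + γ')})
    (y z : MvPolynomial (Fin 2) k ⧸ J)
    (hy : y = Ideal.Quotient.mk J (X 0)) (hz : z = Ideal.Quotient.mk J (X 1)) :
    ∀ p : (MvPolynomial (Fin 2) k ⧸ J) × (MvPolynomial (Fin 2) k ⧸ J),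
      y * p.1 + z * p.2 = 0 ↔
        p ∈ Submodule.span (MvPolynomial (Fin 2) k ⧸ J)
          ({(y ^ (β + β' - 1), 0), (y ^ (β' - 1) * z ^ γ, 0),
            (0, z ^ (γ + γ' - 1)), (z, -y)} :
            Set ((MvPolynomial (Fin 2) k ⧸ J) × (MvPolynomial (Fin 2) k ⧸ J))) :=
  stmt_15_general k β β' γ γ' hβ' hγ' J hJ y z hy hz
end

section
/- Let H = ⟨bα, bβ, a⟩ be a gluing where gcd(α,β) = 1, a = αℓ + βm with ℓ, m ≥ 0, b > 1, gcd(a,b) = 1, and a ∉ {α, β}. Then in the ring A = k[[X,Y,Z]]/(X^β − Y^α, Z^b − X^ℓ Y^m), if b is even and ℓ ≥ 2, the ideal I = (x, z^{b/2}) satisfies I² = xI, where x, z are the images of X, Z. -/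
open MvPowerSeries

/-! For `I = (x, w)` one has `I² = xI + (w²)`, so `I² = xI` as soon as `w² ∈ xI`. With
`w = z^{b/2}` the defining relation gives `w² = z^b = x^ℓ y^m`, which lies in `(x²) ⊆ xI`
because `ℓ ≥ 2`. -/

namespace Ideal

variable {R : Type*} [CommRing R]

theorem span_pair_sq_eq_span_singleton_mul {x w : R}
    (hw : w ^ 2 ∈ span {x} * span {x, w}) :
    span {x, w} ^ 2 = span {x} * span {x, w} := by
  set I := span {x, w}
  have hI : I = span {x} ⊔ span {w} := span_insert x {w}
  have hwI : span {w} ≤ I := span_mono (Set.singleton_subset_iff.2 (Set.mem_insert_of_mem _ rfl))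
  have hxI : span {x} ≤ I := span_mono (Set.singleton_subset_iff.2 (Set.mem_insert _ _))
  have hww : span {w} * span {w} ≤ span {x} * I := by
    rw [span_singleton_mul_span_singleton, ← pow_two, span_le, Set.singleton_subset_iff]
    exact hw
  have hwx : span {w} * span {x} ≤ span {x} * I := by
    rw [mul_comm]; exact mul_mono_right hwI
  have hwmul : span {w} * I ≤ span {x} * I :=
    calc span {w} * I = span {w} * span {x} ⊔ span {w} * span {w} := by rw [← mul_sup, ← hI]
      _ ≤ span {x} * I := sup_le hwx hww
  refine le_antisymm ?_ (pow_two I ▸ mul_mono_left hxI)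
  calc I ^ 2 = (span {x} ⊔ span {w}) * I := by rw [pow_two, ← hI]
    _ = span {x} * I ⊔ span {w} * I := sup_mul _ _ _
    _ ≤ span {x} * I := sup_le le_rfl hwmul

theorem span_pair_sq_eq_span_singleton_mul_of_dvd {x w : R} (hdvd : x ^ 2 ∣ w ^ 2) :
    span {x, w} ^ 2 = span {x} * span {x, w} := by
  obtain ⟨r, hr⟩ := hdvd
  refine span_pair_sq_eq_span_singleton_mul ?_
  rw [hr, pow_two, mul_assoc]
  exact mul_mem_mul (mem_span_singleton_self x)
    (mul_mem_right r _ (subset_span (Set.mem_insert _ _)))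

end Ideal

theorem stmt_16_general (k : Type*) [Field k] (α β b ℓ m : ℕ)
    (hbeven : Even b) (hℓ : 2 ≤ ℓ)
    (J : Ideal (MvPowerSeries (Fin 3) k))
    (hJ : J = Ideal.span
      {(X 0 : MvPowerSeries (Fin 3) k) ^ β - (X 1) ^ α,
       (X 2) ^ b - (X 0) ^ ℓ * (X 1) ^ m})
    (I : Ideal (MvPowerSeries (Fin 3) k ⧸ J))
    (hI : I = Ideal.span {Ideal.Quotient.mk J (X 0), (Ideal.Quotient.mk J (X 2)) ^ (b / 2)}) :
    I ^ 2 = Ideal.span {Ideal.Quotient.mk J (X 0)} * I := by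
  set x := Ideal.Quotient.mk J (X 0)
  set y := Ideal.Quotient.mk J (X 1)
  set z := Ideal.Quotient.mk J (X 2)
  have hz : z ^ b = x ^ ℓ * y ^ m := by
    have hmem : (X 2 : MvPowerSeries (Fin 3) k) ^ b - X 0 ^ ℓ * X 1 ^ m ∈ J :=
      hJ ▸ Ideal.subset_span (Set.mem_insert_of_mem _ rfl)
    simpa [sub_eq_zero] using Ideal.Quotient.eq_zero_iff_mem.2 hmem
  have hdvd : x ^ 2 ∣ (z ^ (b / 2)) ^ 2 := by
    rw [← pow_mul, Nat.div_mul_cancel (even_iff_two_dvd.1 hbeven), hz]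
    exact (pow_dvd_pow x hℓ).mul_right _
  rw [hI]
  exact Ideal.span_pair_sq_eq_span_singleton_mul_of_dvd hdvd

/-- Let `H = ⟨bα, bβ, a⟩` be a gluing with `gcd(α,β) = 1`,
`α, β ≥ 2`, `a = αℓ + βm` (`ℓ, m ≥ 0`), `b > 1`, `gcd(a,b) = 1`,
`a ∉ {α, β}`.  In `A = k[[X,Y,Z]]/(X^β − Y^α, Z^b − X^ℓ Y^m)`, if `b` is even
and `ℓ ≥ 2`, the ideal `I = (x, z^{b/2})` satisfies `I² = xI`, where `x, z`
are the images of `X, Z`. -/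
theorem stmt_16 (k : Type*) [Field k] (α β a b ℓ m : ℕ)
    (hαβ : Nat.Coprime α β) (hα : 2 ≤ α) (hβ : 2 ≤ β)
    (ha : a = α * ℓ + β * m) (hb : 1 < b) (hab : Nat.Coprime a b)
    (haα : a ≠ α) (haβ : a ≠ β)
    (hbeven : Even b) (hℓ : 2 ≤ ℓ)
    (J : Ideal (MvPowerSeries (Fin 3) k))
    (hJ : J = Ideal.span
      {(X 0 : MvPowerSeries (Fin 3) k) ^ β - (X 1) ^ α,
       (X 2) ^ b - (X 0) ^ ℓ * (X 1) ^ m})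
    (I : Ideal (MvPowerSeries (Fin 3) k ⧸ J))
    (hI : I = Ideal.span {Ideal.Quotient.mk J (X 0), (Ideal.Quotient.mk J (X 2)) ^ (b / 2)}) :
    I ^ 2 = Ideal.span {Ideal.Quotient.mk J (X 0)} * I :=
  stmt_16_general k α β b ℓ m hbeven hℓ J hJ I hI
end
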